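/- Let M and A be disjoint antichains in 2^{[n]} with [n] ∉ M, such that each A ∈ A is properly contained in a unique f(A) ∈ M. Then Σ_{M∈M} |M|!(n−|M|)! + Σ_{A∈A} |A|!(n−|A|)! ≤ n! + Σ_{A∈A} |A|!·(|f(A)|−|A|)!·(n−|f(A)|)!. -/

import Mathlib

/-!
Double counting over the `n!` maximal chains of `2^[n]`, encoded by permutations of `Fin n`.
A chain meets each antichain at most once; if it meets `M` in `T` and `A` in `S`, then `T ⊆ S`
would give `T ⊂ f S` inside `M`, so `S ⊂ T` (as `M ∩ A = ∅`) and hence `T = f S`. Thus every chain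
contributes at most `1 + #{S ∈ A | S and f S lie on it}`. Summing over chains, a set `S` lies on
`|S|!(n-|S|)!` of them and a flag `S ⊆ T` on `|S|!(|T|-|S|)!(n-|T|)!`: the permutations carrying
a fixed flag of the same shape onto it form a coset of the stabilizer of its signature
`x ↦ (x ∈ S, x ∈ T)`.
-/

open Finset Equiv Nat

section PermCount
variable {α ι : Type*} [Fintype α] [DecidableEq α] [Fintype ι] [DecidableEq ι]

theorem Equiv.Perm.card_comp_eq_of_card_fiber_eq {f g : α → ι}
    (h : ∀ i, Fintype.card {a // g a = i} = Fintype.card {a // f a = i}) :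
    Fintype.card {σ : Perm α // f ∘ σ = g} = ∏ i, (Fintype.card {a // g a = i})! := by
  -- `τ` carries the fibres of `g` onto those of `f`, so `σ ↦ τ⁻¹ * σ` turns solutions into
  -- the stabilizer of `g`.
  let τ : Perm α := ofFiberEquiv fun i => Fintype.equivOfCardEq (h i)
  have hτ : f ∘ τ = g := funext (ofFiberEquiv_map _)
  have hcomp (σ : Perm α) : g ∘ ⇑(τ⁻¹ * σ) = f ∘ σ := by
    ext x
    simp [← hτ]
  rw [← DomMulAct.stabilizer_card g]
  exact Fintype.card_congr (subtypeEquiv (Equiv.mulLeft τ⁻¹) fun σ => by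
    rw [Equiv.coe_mulLeft, hcomp])

end PermCount

section Flag
variable {α : Type*} [Fintype α] [DecidableEq α]

def flagSignature (S T : Finset α) (x : α) : Bool × Bool := (decide (x ∈ S), decide (x ∈ T))

def flagFiberCard (s t n : ℕ) : Bool × Bool → ℕ
  | (true, true) => s
  | (true, false) => 0
  | (false, true) => t - s
  | (false, false) => n - t

theorem card_fiber_flagSignature {S T : Finset α} (hST : S ⊆ T) (p : Bool × Bool) :
    Fintype.card {x // flagSignature S T x = p} = flagFiberCard #S #T (Fintype.card α) p := by
  obtain ⟨_ | _, _ | _⟩ := p <;>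
    simp only [flagSignature, flagFiberCard, Prod.mk.injEq, decide_eq_true_eq,
      decide_eq_false_iff_not, Fintype.card_subtype]
  · rw [← card_compl]
    congr 1
    ext x
    simpa using fun hxT hxS => hxT (hST hxS)
  · rw [← card_sdiff_of_subset hST]
    congr 1
    ext x
    simp [and_comm]
  · exact card_eq_zero.2 (filter_eq_empty_iff.2 fun x _ hx => hx.2 (hST hx.1))
  · congr 1
    ext x
    simpa using fun hxS => hST hxS

theorem prod_factorial_flagFiberCard (s t n : ℕ) :
    ∏ p, (flagFiberCard s t n p)! = s ! * (t - s)! * (n - t)! := by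
  simp only [flagFiberCard, Fintype.prod_prod_type, Fintype.prod_bool, factorial_zero, mul_one]
  ring

theorem card_perm_mapsTo_flag {S T S' T' : Finset α} (hST : S ⊆ T) (hST' : S' ⊆ T')
    (hS : #S' = #S) (hT : #T' = #T) :
    #{σ : Perm α | ∀ x, (x ∈ S' ↔ σ x ∈ S) ∧ (x ∈ T' ↔ σ x ∈ T)}
      = (#S)! * (#T - #S)! * (Fintype.card α - #T)! := by
  have hsig (σ : Perm α) : (∀ x, (x ∈ S' ↔ σ x ∈ S) ∧ (x ∈ T' ↔ σ x ∈ T)) ↔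
      flagSignature S T ∘ σ = flagSignature S' T' := by
    simp [funext_iff, flagSignature, iff_comm]
  have hfib (p : Bool × Bool) : Fintype.card {x // flagSignature S' T' x = p}
      = flagFiberCard #S #T (Fintype.card α) p := by
    rw [card_fiber_flagSignature hST', hS, hT]
  rw [← Fintype.card_subtype, Fintype.card_congr (subtypeEquivRight hsig),
    Perm.card_comp_eq_of_card_fiber_eq fun p => by rw [hfib, card_fiber_flagSignature hST]]
  simp_rw [hfib]
  exact prod_factorial_flagFiberCard _ _ _

end Flag

section Chain
variable {n : ℕ}

def initialSeg (n k : ℕ) : Finset (Fin n) := {i | (i : ℕ) < k}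

theorem card_initialSeg {k : ℕ} (hk : k ≤ n) : #(initialSeg n k) = k := by
  simp [initialSeg, Fin.card_filter_val_lt, hk]

theorem initialSeg_mono {k l : ℕ} (h : k ≤ l) : initialSeg n k ⊆ initialSeg n l := by
  intro i
  simpa [initialSeg] using fun hi => hi.trans_le h

/-- The permutation `σ` encodes the maximal chain `∅ ⊂ {σ 0} ⊂ {σ 0, σ 1} ⊂ ⋯` of `2^[n]`;
`S` lies on it iff `σ` maps the first `#S` elements of `Fin n` onto `S`. -/
def OnChain (σ : Perm (Fin n)) (S : Finset (Fin n)) : Prop :=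
  ∀ x, x ∈ initialSeg n #S ↔ σ x ∈ S

instance (σ : Perm (Fin n)) : DecidablePred (OnChain σ) := fun _ =>
  inferInstanceAs (Decidable (∀ _, _))

theorem card_onChain_and_onChain {S T : Finset (Fin n)} (hST : S ⊆ T) :
    #{σ | OnChain σ S ∧ OnChain σ T} = (#S)! * (#T - #S)! * (n - #T)! := by
  have hS : #(initialSeg n #S) = #S :=
    card_initialSeg ((card_le_univ S).trans_eq (Fintype.card_fin n))
  have hT : #(initialSeg n #T) = #T :=
    card_initialSeg ((card_le_univ T).trans_eq (Fintype.card_fin n))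
  have h := card_perm_mapsTo_flag hST (initialSeg_mono (card_le_card hST)) hS hT
  rw [Fintype.card_fin] at h
  convert h using 2
  ext σ
  simp only [mem_filter, mem_univ, true_and]
  simp only [OnChain, forall_and]

theorem card_onChain (S : Finset (Fin n)) : #{σ | OnChain σ S} = (#S)! * (n - #S)! := by
  simpa only [and_self, Nat.sub_self, factorial_zero, mul_one] using
    card_onChain_and_onChain (subset_refl S)

theorem OnChain.subset_of_card_le {σ : Perm (Fin n)} {S T : Finset (Fin n)} (hS : OnChain σ S)
    (hT : OnChain σ T) (h : #S ≤ #T) : S ⊆ T := by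
  intro y hy
  have hyS : σ.symm y ∈ initialSeg n #S := (hS _).2 (by simpa using hy)
  simpa using (hT _).1 (initialSeg_mono h hyS)

theorem isChain_onChain (σ : Perm (Fin n)) : IsChain (· ⊆ ·) {S | OnChain σ S} := by
  intro S hS T hT _
  exact (le_total #S #T).imp (hS.subset_of_card_le hT) (hT.subset_of_card_le hS)

end Chain

theorem card_filter_add_card_filter_le_of_isChain {β : Type*} [PartialOrder β] {M A : Finset β}
    (hM : IsAntichain (· ≤ ·) (M : Set β)) (hA : IsAntichain (· ≤ ·) (A : Set β))
    (hdisj : Disjoint M A) {f : β → β} (hf : ∀ S ∈ A, f S ∈ M ∧ S < f S ∧ ∀ T ∈ M, S < T → T = f S)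
    {c : β → Prop} [DecidablePred c] (hc : IsChain (· ≤ ·) {S | c S}) :
    #{S ∈ M | c S} + #{S ∈ A | c S} ≤ 1 + #{S ∈ A | c S ∧ c (f S)} := by
  have hle_one {B : Finset β} (hB : IsAntichain (· ≤ ·) (B : Set β)) : #{S ∈ B | c S} ≤ 1 := by
    rw [card_le_one_iff_subsingleton, coe_filter]
    exact inter_subsingleton_of_isAntichain_of_isChain hB hc
  have hmatch {T S : β} (hT : T ∈ M) (hcT : c T) (hS : S ∈ A) (hcS : c S) : c (f S) := by
    obtain ⟨hfS, hSf, huniq⟩ := hf S hS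
    rcases hc.total hcT hcS with hTS | hST
    · exact absurd (hTS.trans_lt hSf) (hM.not_lt hT hfS)
    · have hne : S ≠ T := fun h => disjoint_left.1 hdisj hT (h ▸ hS)
      rwa [← huniq T hT (hST.lt_of_ne hne)]
  rcases (M.filter c).eq_empty_or_nonempty with hM0 | ⟨T, hT⟩
  · rw [hM0, card_empty, zero_add]
    exact le_add_right (hle_one hA)
  rcases (A.filter c).eq_empty_or_nonempty with hA0 | ⟨S, hS⟩
  · rw [hA0, card_empty, add_zero]
    exact le_add_right (hle_one hM)
  rw [mem_filter] at hT hS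
  have : 0 < #{S ∈ A | c S ∧ c (f S)} :=
    card_pos.2 ⟨S, mem_filter.2 ⟨hS.1, hS.2, hmatch hT.1 hT.2 hS.1 hS.2⟩⟩
  linarith [hle_one hM, hle_one hA]

theorem stmt_16_general (n : ℕ) (M A : Finset (Finset (Fin n)))
    (hM : IsAntichain (· ⊆ ·) (M : Set (Finset (Fin n))))
    (hA : IsAntichain (· ⊆ ·) (A : Set (Finset (Fin n))))
    (hdisj : Disjoint M A)
    (f : Finset (Fin n) → Finset (Fin n))
    (hf : ∀ S ∈ A, f S ∈ M ∧ S ⊂ f S ∧ ∀ T ∈ M, S ⊂ T → T = f S) :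
    ∑ S ∈ M, S.card.factorial * (n - S.card).factorial
      + ∑ S ∈ A, S.card.factorial * (n - S.card).factorial
      ≤ n.factorial
        + ∑ S ∈ A, S.card.factorial * ((f S).card - S.card).factorial
            * (n - (f S).card).factorial := by
  calc _ = ∑ σ : Perm (Fin n), (#{S ∈ M | OnChain σ S} + #{S ∈ A | OnChain σ S}) := by
        simp_rw [sum_add_distrib, ← card_onChain]
        congr 1 <;> exact sum_card_bipartiteAbove_eq_sum_card_bipartiteBelow _
    _ ≤ ∑ σ : Perm (Fin n), (1 + #{S ∈ A | OnChain σ S ∧ OnChain σ (f S)}) :=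
        sum_le_sum fun σ _ =>
          card_filter_add_card_filter_le_of_isChain hM hA hdisj hf (isChain_onChain σ)
    _ = _ := by
        rw [sum_add_distrib, sum_const, Finset.card_univ, Fintype.card_perm, Fintype.card_fin,
          smul_eq_mul, mul_one]
        congr 1
        rw [← sum_congr rfl fun S hS => card_onChain_and_onChain (hf S hS).2.1.subset]
        exact (sum_card_bipartiteAbove_eq_sum_card_bipartiteBelow _).symm

theorem stmt_16 (n : ℕ) (M A : Finset (Finset (Fin n)))
    (hM : IsAntichain (· ⊆ ·) (M : Set (Finset (Fin n))))
    (hA : IsAntichain (· ⊆ ·) (A : Set (Finset (Fin n))))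
    (hdisj : Disjoint M A)
    (hfull : (Finset.univ : Finset (Fin n)) ∉ M)
    (f : Finset (Fin n) → Finset (Fin n))
    (hf : ∀ S ∈ A, f S ∈ M ∧ S ⊂ f S ∧ ∀ T ∈ M, S ⊂ T → T = f S) :
    ∑ S ∈ M, S.card.factorial * (n - S.card).factorial
      + ∑ S ∈ A, S.card.factorial * (n - S.card).factorial
      ≤ n.factorial
        + ∑ S ∈ A, S.card.factorial * ((f S).card - S.card).factorial
            * (n - (f S).card).factorial :=
  stmt_16_general n M A hM hA hdisj f hf
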